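/- arXiv:1611.07436 — 4 statements merged into one kernel-verified Lean document; each statement's English description precedes it below -/
import Mathlib

section
/- Let n ≤ 4 and let a₁, …, aₙ be real numbers satisfying 1 ≥ a₁ ≥ a₂ ≥ ⋯ ≥ aₙ ≥ 0 and aᵢ + aⱼ ≤ 1 for all i ≠ j. Then a₁² + a₂² + ⋯ + aₙ² ≤ 1. -/
/-- Key numerical estimate for reduced symplectic forms: if `n ≤ 4` and
`1 ≥ a₁ ≥ ⋯ ≥ aₙ ≥ 0` with `aᵢ + aⱼ ≤ 1` for `i ≠ j`, then `Σ aᵢ² ≤ 1`. -/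
theorem stmt_0 (n : ℕ) (hn : n ≤ 4) (a : Fin n → ℝ)
    (hle1 : ∀ i, a i ≤ 1) (hnonneg : ∀ i, 0 ≤ a i)
    (hmono : ∀ i j : Fin n, i ≤ j → a j ≤ a i)
    (hsum : ∀ i j : Fin n, i ≠ j → a i + a j ≤ 1) :
    ∑ i, (a i) ^ 2 ≤ 1 := by
  interval_cases n
  · simp
  · rw [Fin.sum_univ_one]
    nlinarith [hle1 0, hnonneg 0]
  · simp [Fin.sum_univ_succ]
    nlinarith [hsum 0 1 (by decide), hnonneg 0, hnonneg 1, hle1 0, hle1 1,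
      mul_nonneg (hnonneg 0) (hnonneg 1)]
  · simp [Fin.sum_univ_succ]
    nlinarith [hsum 0 1 (by decide), hsum 0 2 (by decide), hsum 1 2 (by decide),
      hnonneg 0, hnonneg 1, hnonneg 2, hle1 0, hmono 1 2 (by decide),
      mul_nonneg (hnonneg 0) (hnonneg 1), mul_nonneg (hnonneg 1) (hnonneg 2),
      mul_nonneg (hnonneg 0) (hnonneg 2)]
  · rw [Fin.sum_univ_four]
    have h01 := hsum 0 1 (by decide)
    have h23 := hsum 2 3 (by decide)
    have h02 := hsum 0 2 (by decide)
    have m01 := hmono 0 1 (by decide)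
    have m23 := hmono 2 3 (by decide)
    nlinarith [mul_nonneg (hnonneg 1) (sub_nonneg.2 m01),
      mul_nonneg (hnonneg 3) (sub_nonneg.2 m23),
      mul_nonneg (hnonneg 0) (by linarith : (0:ℝ) ≤ 1 - a 0 - a 1),
      mul_nonneg (hnonneg 2) (by linarith : (0:ℝ) ≤ 1 - a 2 - a 3),
      hnonneg 0, hnonneg 1, hnonneg 2, hnonneg 3]
end

section
/- Let A = pB + qF − Σᵢ rᵢEᵢ with integers p ≥ 2, q ≥ 1, rᵢ (at most 4 of them), satisfying the genus-zero adjunction relation Σᵢ rᵢ(rᵢ−1) = 2(p−1)(q−1) and Σᵢ rᵢ = 2p + 2q + k for some integer k ≥ −1. If additionally q > 1, then these conditions are contradictory; hence no genus-zero class with p ≥ 2, q > 1 and A·A < 0 exists. In particular any spherical class with negative square has p ∈ {0, 1}. -/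
/-- No genus-zero class `A = pB + qF − Σ rᵢEᵢ` (at most 4 terms) exists with
`p ≥ 2`, `q > 1`, `Σ rᵢ(rᵢ−1) = 2(p−1)(q−1)` and `Σ rᵢ = 2p + 2q + k`,
`k ≥ −1`. -/
theorem stmt_13 (n : ℕ) (hn : n ≤ 4) (p q k : ℤ) (r : Fin n → ℤ)
    (hp : 2 ≤ p) (hq : 1 ≤ q) (hq2 : 1 < q) (hk : -1 ≤ k)
    (hadj : ∑ i, r i * (r i - 1) = 2 * (p - 1) * (q - 1))
    (hsum : ∑ i, r i = 2 * p + 2 * q + k) :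
    False := by
  have hcs : (∑ i, r i) ^ 2 ≤ (n : ℤ) * ∑ i, (r i) ^ 2 :=
    by simpa using sq_sum_le_card_mul_sum_sq (s := Finset.univ) (f := r)
  have hsq : ∑ i, (r i) ^ 2 = 2 * (p - 1) * (q - 1) + (2 * p + 2 * q + k) := by
    rw [← hadj, ← hsum, ← Finset.sum_add_distrib]
    congr 1; ext i; ring
  have hn' : (n : ℤ) ≤ 4 := by exact_mod_cast hn
  have hpos : 0 ≤ ∑ i, (r i) ^ 2 := Finset.sum_nonneg fun i _ => sq_nonneg _
  nlinarith [hcs, hsq, sq_nonneg (p + q), sq_nonneg (p - q)]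
end

section
/- Let ω = (1 | c₁, c₂, c₃, c₄, c₅) be reduced on CP² # 5 CP²-bar (1 > c₁ ≥ ⋯ ≥ c₅ > 0, 1 ≥ cᵢ + cⱼ + c_k) with c₁ ≥ c₂ + c₃. Then the vector ω_l = (1 | c₁, c₂, c₃, c₃, c₃) is also reduced, c₃ < 1/3, and c₃ is the minimum of the ω_l-areas of all 16 classes of the forms Eᵢ, H − Eᵢ − Eⱼ (i < j), and 2H − E₁ − E₂ − E₃ − E₄ − E₅. -/
/-- If `ω = (1 | c₁,…,c₅)` is reduced on `CP² # 5 CP²bar` with `c₁ ≥ c₂ + c₃`,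
then `ω_l = (1 | c₁, c₂, c₃, c₃, c₃)` is also reduced, `c₃ < 1/3`, and `c₃`
is a lower bound for the `ω_l`-areas of all 16 exceptional classes `Eᵢ`,
`H − Eᵢ − Eⱼ`, `2H − E₁ − ⋯ − E₅`. -/
theorem stmt_16 (c : Fin 5 → ℝ)
    (hmono : ∀ i j : Fin 5, i ≤ j → c j ≤ c i)
    (h1 : c 0 < 1) (hpos : 0 < c 4)
    (hred : ∀ i j k : Fin 5, i ≠ j → j ≠ k → i ≠ k → c i + c j + c k ≤ 1)
    (hbal : c 1 + c 2 ≤ c 0) :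
    let ωl : Fin 5 → ℝ := ![c 0, c 1, c 2, c 2, c 2]
    ((∀ i j : Fin 5, i ≤ j → ωl j ≤ ωl i) ∧ ωl 0 < 1 ∧ 0 < ωl 4 ∧
      (∀ i j k : Fin 5, i ≠ j → j ≠ k → i ≠ k → ωl i + ωl j + ωl k ≤ 1)) ∧
    c 2 < 1/3 ∧
    (∀ i : Fin 5, c 2 ≤ ωl i) ∧
    (∀ i j : Fin 5, i < j → c 2 ≤ 1 - ωl i - ωl j) ∧
    c 2 ≤ 2 - ∑ i, ωl i := by
  have h01 : c 1 ≤ c 0 := hmono 0 1 (by decide)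
  have h12 : c 2 ≤ c 1 := hmono 1 2 (by decide)
  have h24 : c 4 ≤ c 2 := hmono 2 4 (by decide)
  have h012 : c 0 + c 1 + c 2 ≤ 1 := hred 0 1 2 (by decide) (by decide) (by decide)
  have hc2 : c 2 ≤ 1/4 := by linarith
  intro ωl
  have hv : ∀ m : Fin 5, (m.val = 0 ∧ ωl m = c 0) ∨ (m.val = 1 ∧ ωl m = c 1) ∨
      (2 ≤ m.val ∧ ωl m = c 2) := by
    intro m
    fin_cases m
    · exact Or.inl ⟨rfl, rfl⟩
    · exact Or.inr (Or.inl ⟨rfl, rfl⟩)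
    · exact Or.inr (Or.inr ⟨by norm_num, rfl⟩)
    · exact Or.inr (Or.inr ⟨by norm_num, rfl⟩)
    · exact Or.inr (Or.inr ⟨by norm_num, rfl⟩)
  refine ⟨⟨?_, ?_, ?_, ?_⟩, ?_, ?_, ?_, ?_⟩
  · intro i j hij
    rw [Fin.le_def] at hij
    rcases hv i with ⟨hi, ei⟩ | ⟨hi, ei⟩ | ⟨hi, ei⟩ <;>
      rcases hv j with ⟨hj, ej⟩ | ⟨hj, ej⟩ | ⟨hj, ej⟩ <;>
      first | omega | (rw [ei, ej]; try linarith)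
  · show c 0 < 1; exact h1
  · show (0:ℝ) < c 2; linarith
  · intro i j k hij hjk hik
    have hij' : i.val ≠ j.val := fun h => hij (Fin.ext h)
    have hjk' : j.val ≠ k.val := fun h => hjk (Fin.ext h)
    have hik' : i.val ≠ k.val := fun h => hik (Fin.ext h)
    rcases hv i with ⟨hi, ei⟩ | ⟨hi, ei⟩ | ⟨hi, ei⟩ <;>
      rcases hv j with ⟨hj, ej⟩ | ⟨hj, ej⟩ | ⟨hj, ej⟩ <;>
      rcases hv k with ⟨hk, ek⟩ | ⟨hk, ek⟩ | ⟨hk, ek⟩ <;>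
      first | omega | (rw [ei, ej, ek]; linarith)
  · linarith
  · intro i
    rcases hv i with ⟨hi, ei⟩ | ⟨hi, ei⟩ | ⟨hi, ei⟩ <;> rw [ei] <;> linarith
  · intro i j hij
    rw [Fin.lt_def] at hij
    rcases hv i with ⟨hi, ei⟩ | ⟨hi, ei⟩ | ⟨hi, ei⟩ <;>
      rcases hv j with ⟨hj, ej⟩ | ⟨hj, ej⟩ | ⟨hj, ej⟩ <;>
      first | omega | (rw [ei, ej]; try linarith)
  · have : ∑ i, ωl i = c 0 + c 1 + c 2 + c 2 + c 2 := by
      simp [ωl, Fin.sum_univ_five]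
    rw [this]; linarith
end

section
/- Let A = pB + qF − Σᵢ rᵢEᵢ (n ≤ 4 terms) be a class with A·A = 0, genus zero (i.e. 2(p−1)(q−1) = Σ rᵢ(rᵢ−1)), positive area for some reduced form, and satisfying the constraints p ∈ {0,1} with rᵢ ∈ {0,1} when p = 1, and q ∈ {0,1} when p = 0. Then A is one of: F, B, B + F − Eᵢ − Eⱼ (i < j), 2B + F − E₁ − E₂ − E₃ − E₄, or B + 2F − E₁ − E₂ − E₃ − E₄. -/
/-- Classification of square-zero genus-zero classes `A = pB + qF − Σ rᵢEᵢ`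
(`n ≤ 4`) with positive area for some reduced form and satisfying the
constraints `p ∈ {0,1}`, `rᵢ ∈ {0,1}` when `p = 1`, `q ∈ {0,1}` when `p = 0`:
`A` is `F`, `B`, `B + F − Eᵢ − Eⱼ`, `2B + F − E₁ − E₂ − E₃ − E₄`, or
`B + 2F − E₁ − E₂ − E₃ − E₄`. -/
theorem stmt_18 (n : ℕ) (hn : n ≤ 4) (p q : ℤ) (r : Fin n → ℤ)
    (hsq : 2 * p * q - ∑ i, (r i) ^ 2 = 0)
    (hgenus : 2 * (p - 1) * (q - 1) = ∑ i, r i * (r i - 1))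
    (harea : ∃ (μ : ℝ) (a : Fin n → ℝ), 1 ≤ μ ∧
      (∀ i, 0 ≤ a i ∧ a i ≤ 1) ∧
      (∀ i j : Fin n, i ≤ j → a j ≤ a i) ∧
      (∀ i j : Fin n, i ≠ j → a i + a j ≤ 1) ∧
      0 < (p : ℝ) * μ + (q : ℝ) - ∑ i, (r i : ℝ) * a i)
    (hp : p = 0 ∨ p = 1)
    (hp1 : p = 1 → ∀ i, r i = 0 ∨ r i = 1)
    (hp0 : p = 0 → q = 0 ∨ q = 1) :
    (p = 0 ∧ q = 1 ∧ ∀ i, r i = 0) ∨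
    (p = 1 ∧ q = 0 ∧ ∀ i, r i = 0) ∨
    (p = 1 ∧ q = 1 ∧ ∃ i j : Fin n, i < j ∧
      ∀ l, r l = if l = i ∨ l = j then 1 else 0) ∨
    (p = 2 ∧ q = 1 ∧ n = 4 ∧ ∀ i, r i = 1) ∨
    (p = 1 ∧ q = 2 ∧ n = 4 ∧ ∀ i, r i = 1) := by
  classical
  clear harea hp0
  rcases hp with hp | hp
  · subst hp
    have hr0 : ∀ i, r i = 0 := by
      intro i
      have h1 : ∑ i, (r i) ^ 2 = 0 := by linarith
      have h2 := (Finset.sum_eq_zero_iff_of_nonneg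
        (fun i _ => sq_nonneg (r i))).mp h1 i (Finset.mem_univ i)
      exact pow_eq_zero_iff (by norm_num) |>.mp h2
    have hq : q = 1 := by
      have h3 : ∑ i, r i * (r i - 1) = 0 :=
        Finset.sum_eq_zero (fun i _ => by rw [hr0 i]; ring)
      rw [h3] at hgenus; linarith
    exact Or.inl ⟨rfl, hq, hr0⟩
  · subst hp
    have hr := hp1 rfl
    set S : Finset (Fin n) := Finset.univ.filter (fun i => r i = 1) with hS
    have hmem : ∀ l, l ∈ S ↔ r l = 1 := by
      intro l; simp [hS]
    have hnot : ∀ l, l ∉ S → r l = 0 := by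
      intro l hl
      rcases hr l with h | h
      · exact h
      · exact absurd ((hmem l).mpr h) hl
    have hsum : ∑ i, r i = (S.card : ℤ) := by
      rw [← Finset.sum_filter_add_sum_filter_not Finset.univ (fun i => r i = 1)]
      have h1 : ∑ i ∈ Finset.univ.filter (fun i => ¬ r i = 1), r i = 0 :=
        Finset.sum_eq_zero (fun i hi => by
          rcases hr i with h | h
          · exact h
          · simp [h] at hi)
      have h2 : ∑ i ∈ S, r i = (S.card : ℤ) :=
        Finset.sum_congr rfl (fun i hi => (hmem i).mp hi) |>.trans (by simp)
      rw [h1, h2, add_zero]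
    have hsqs : ∑ i, (r i) ^ 2 = ∑ i, r i :=
      Finset.sum_congr rfl (fun i _ => by rcases hr i with h | h <;> rw [h] <;> ring)
    have hcard2 : 2 * q = (S.card : ℤ) := by rw [← hsum, ← hsqs]; linarith
    have hcle : S.card ≤ n := by
      simpa using Finset.card_filter_le Finset.univ (fun i => r i = 1)
    have hc4 : S.card ≤ 4 := hcle.trans hn
    interval_cases hc : S.card
    · -- card 0
      have hq : q = 0 := by omega
      refine Or.inr (Or.inl ⟨rfl, hq, fun i => hnot i ?_⟩)
      rw [Finset.card_eq_zero] at hc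
      simp [hc]
    · omega
    · -- card 2
      have hq : q = 1 := by omega
      obtain ⟨a, b, hab, hSab⟩ := Finset.card_eq_two.mp hc
      have key : ∀ (a b : Fin n), a < b → S = {a, b} →
          ∃ i j : Fin n, i < j ∧ ∀ l, r l = if l = i ∨ l = j then 1 else 0 := by
        intro a b hlt hSab
        refine ⟨a, b, hlt, fun l => ?_⟩
        by_cases h : l = a ∨ l = b
        · simp only [h, if_true]
          exact (hmem l).mp (by rw [hSab]; simpa using h)
        · simp only [h, if_false]
          exact hnot l (by rw [hSab]; simpa using h)
      rcases lt_or_gt_of_ne hab with hlt | hlt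
      · exact Or.inr (Or.inr (Or.inl ⟨rfl, hq, key a b hlt hSab⟩))
      · exact Or.inr (Or.inr (Or.inl ⟨rfl, hq, key b a hlt
          (hSab.trans (Finset.pair_comm a b))⟩))
    · omega
    · -- card 4
      have hq : q = 2 := by omega
      have hn4 : n = 4 := by omega
      have hSuniv : S = Finset.univ :=
        Finset.eq_univ_of_card S (by simp [hc, hn4])
      refine Or.inr (Or.inr (Or.inr (Or.inr ⟨rfl, hq, hn4, fun i => ?_⟩)))
      exact (hmem i).mp (hSuniv ▸ Finset.mem_univ i)
end
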